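/- (Appendix Lemma A.1, bound part) Let Θ ⊆ ℝ^d, 𝒵 ⊆ ℝ^{d_z} be open, f : Θ → 𝒵 and g : 𝒵 → ℝ both p-times differentiable, and h = g ∘ f. Suppose there is K ≥ 1 and φ : Θ → [1,∞) with max{‖f(θ)‖, ‖∂_θ^α f(θ)‖} ≤ φ(θ) for all 0 ≠ α, |α| ≤ p, and |∂^β g(z)| ≤ K |g(z)| (1 + ‖z‖)^{|β|} for all z ∈ 𝒵 and 0 ≠ β, |β| ≤ p. Then there exists L ∈ [1,∞) such that |∂_θ^α h(θ)| ≤ L |h(θ)| φ(θ)^{2|α|} for all θ ∈ Θ and all multi-indices 0 ≠ α with |α| ≤ p. -/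

import Mathlib

/-- Partial derivative along coordinate `i`. -/
noncomputable def pd {d : ℕ} {F : Type*} [NormedAddCommGroup F] [NormedSpace ℝ F]
    (i : Fin d) (f : (Fin d → ℝ) → F) : (Fin d → ℝ) → F :=
  fun x => fderiv ℝ f x (Pi.single i 1)

/-- Iterated mixed partial derivative along the list of coordinates `L`. -/
noncomputable def pdL {d : ℕ} {F : Type*} [NormedAddCommGroup F] [NormedSpace ℝ F]
    (L : List (Fin d)) (f : (Fin d → ℝ) → F) : (Fin d → ℝ) → F :=
  L.foldr pd f

/-! By the chain and Leibniz rules, `∂^α (g ∘ f)` with `|α| = n` is a sum of at most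
`(d_z + n)^n` terms `∂^β g (f θ) · ∏ₖ ∂^{αₖ} f_{jₖ}(θ)` with `|β| ≤ n`, at most `n` factors and
`|αₖ| ≤ n` (a crude Faà di Bruno formula). Since `1 + ‖f θ‖ ≤ 2 φ(θ)`, the hypotheses bound each
term by `K |g (f θ)| (2φ(θ))^n φ(θ)^n`, so `L = K (2 (d_z + p) + 1)^p` works. -/

section PartialDerivatives

variable {d : ℕ} {F : Type*} [NormedAddCommGroup F] [NormedSpace ℝ F]

theorem contDiffOn_pd {s : Set (Fin d → ℝ)} (hs : IsOpen s) {u : (Fin d → ℝ) → F} {m : ℕ}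
    (hu : ContDiffOn ℝ (m + 1 : ℕ) u s) (i : Fin d) : ContDiffOn ℝ m (pd i u) s :=
  (hu.fderiv_of_isOpen hs (by norm_cast)).clm_apply contDiffOn_const

theorem contDiffOn_pdL {s : Set (Fin d → ℝ)} (hs : IsOpen s) {u : (Fin d → ℝ) → F} {p : ℕ}
    (hu : ContDiffOn ℝ p u s) (L : List (Fin d)) (hL : L.length ≤ p) :
    ContDiffOn ℝ (p - L.length : ℕ) (pdL L u) s := by
  induction L with
  | nil => simpa [pdL] using hu
  | cons i L ih =>
    simp only [List.length_cons] at hL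
    have h := ih (by omega)
    rw [show p - L.length = p - (L.length + 1) + 1 by omega] at h
    exact contDiffOn_pd hs h i

theorem differentiableAt_pdL {s : Set (Fin d → ℝ)} (hs : IsOpen s)
    {u : (Fin d → ℝ) → F} {p : ℕ} (hu : ContDiffOn ℝ p u s) {L : List (Fin d)}
    (hL : L.length < p) {x : Fin d → ℝ} (hx : x ∈ s) : DifferentiableAt ℝ (pdL L u) x :=
  ((contDiffOn_pdL hs hu L hL.le).differentiableOn (by simp; omega)).differentiableAt
    (hs.mem_nhds hx)

theorem pd_congr_of_eqOn {s : Set (Fin d → ℝ)} (hs : IsOpen s) {u v : (Fin d → ℝ) → F}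
    (h : Set.EqOn u v s) (i : Fin d) {x : Fin d → ℝ} (hx : x ∈ s) : pd i u x = pd i v x := by
  simp only [pd, (Filter.eventuallyEq_of_mem (hs.mem_nhds hx) h).fderiv_eq]

theorem pd_apply {dz : ℕ} {u : (Fin d → ℝ) → Fin dz → ℝ} {x : Fin d → ℝ}
    (hu : DifferentiableAt ℝ u x) (i : Fin d) (j : Fin dz) :
    pd i (fun t => u t j) x = pd i u x j := by
  simp [pd, fderiv_apply hu]

theorem pd_comp {dz : ℕ} {D : (Fin dz → ℝ) → ℝ} {u : (Fin d → ℝ) → Fin dz → ℝ}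
    {x : Fin d → ℝ} (hD : DifferentiableAt ℝ D (u x)) (hu : DifferentiableAt ℝ u x)
    (i : Fin d) : pd i (fun t => D (u t)) x = ∑ j, pd j D (u x) * pd i u x j := by
  rw [pd, fderiv_fun_comp x hD hu, ContinuousLinearMap.comp_apply,
    pi_eq_sum_univ' (fderiv ℝ u x (Pi.single i 1)), map_sum]
  simp [pd, mul_comm]

theorem pd_mul {a b : (Fin d → ℝ) → ℝ} {x : Fin d → ℝ} (ha : DifferentiableAt ℝ a x)
    (hb : DifferentiableAt ℝ b x) (i : Fin d) :
    pd i (fun t => a t * b t) x = pd i a x * b x + a x * pd i b x := by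
  simp only [pd, fderiv_fun_mul ha hb]
  simp [mul_comm]
  ring

theorem hasFDerivAt_multiset_sum {ι : Type*} (s : Multiset ι) {u : ι → (Fin d → ℝ) → F}
    {u' : ι → (Fin d → ℝ) →L[ℝ] F} {x : Fin d → ℝ} (h : ∀ k ∈ s, HasFDerivAt (u k) (u' k) x) :
    HasFDerivAt (fun t => (s.map fun k => u k t).sum) (s.map u').sum x := by
  induction s using Multiset.induction_on with
  | empty => simpa using hasFDerivAt_const (0 : F) x
  | cons k s ih =>
    simp only [Multiset.map_cons, Multiset.sum_cons]
    exact (h k (Multiset.mem_cons_self k s)).add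
      (ih fun k hk => h k (Multiset.mem_cons_of_mem hk))

theorem pd_multiset_sum {ι : Type*} (s : Multiset ι) {u : ι → (Fin d → ℝ) → F}
    {x : Fin d → ℝ} (h : ∀ k ∈ s, DifferentiableAt ℝ (u k) x) (i : Fin d) :
    pd i (fun t => (s.map fun k => u k t).sum) x = (s.map fun k => pd i (u k) x).sum := by
  rw [pd, (hasFDerivAt_multiset_sum s fun k hk => (h k hk).hasFDerivAt).fderiv,
    ← ContinuousLinearMap.apply_apply (Pi.single i 1 : Fin d → ℝ), map_multiset_sum,
    Multiset.map_map]
  rfl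

end PartialDerivatives

theorem abs_multiset_sum_map_le {ι : Type*} (s : Multiset ι) (v : ι → ℝ) {c : ℝ}
    (h : ∀ k ∈ s, |v k| ≤ c) : |(s.map v).sum| ≤ Multiset.card s * c := by
  calc |(s.map v).sum| ≤ ((s.map v).map abs).sum := Multiset.abs_sum_le_sum_abs
    _ ≤ Multiset.card ((s.map v).map abs) • c :=
        Multiset.sum_le_card_nsmul _ _ (by simpa using h)
    _ = Multiset.card s * c := by simp

section Bounds

variable {d dz p : ℕ}

theorem abs_pdL_le_of_forall_ne_nil {g : (Fin dz → ℝ) → ℝ} {z : Fin dz → ℝ} {K : ℝ}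
    (hK : 1 ≤ K) (hg : ∀ Lz : List (Fin dz), Lz ≠ [] → Lz.length ≤ p →
      |pdL Lz g z| ≤ K * |g z| * (1 + ‖z‖) ^ Lz.length)
    {Lz : List (Fin dz)} (hLz : Lz.length ≤ p) :
    |pdL Lz g z| ≤ K * |g z| * (1 + ‖z‖) ^ Lz.length := by
  rcases eq_or_ne Lz [] with rfl | hne
  · simpa [pdL] using le_mul_of_one_le_left (abs_nonneg (g z)) hK
  · exact hg Lz hne hLz

theorem norm_pdL_le_of_forall_ne_nil {f : (Fin d → ℝ) → Fin dz → ℝ} {θ : Fin d → ℝ} {ψ : ℝ}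
    (hf₀ : ‖f θ‖ ≤ ψ) (hf : ∀ L : List (Fin d), L ≠ [] → L.length ≤ p → ‖pdL L f θ‖ ≤ ψ)
    {L : List (Fin d)} (hL : L.length ≤ p) : ‖pdL L f θ‖ ≤ ψ := by
  rcases eq_or_ne L [] with rfl | hne
  · exact hf₀
  · exact hf L hne hL

end Bounds

/-- A term `∂^outer g (f θ) * ∏_{(L, j) ∈ inner} ∂^L f_j (θ)` of the Faà di Bruno expansion. -/
structure FaaDiBrunoTerm (d dz : ℕ) where
  outer : List (Fin dz)
  inner : List (List (Fin d) × Fin dz)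

namespace FaaDiBrunoTerm

variable {d dz p : ℕ}

noncomputable def innerProd (f : (Fin d → ℝ) → Fin dz → ℝ) (Q : List (List (Fin d) × Fin dz))
    (θ : Fin d → ℝ) : ℝ :=
  (Q.map fun q => pdL q.1 f θ q.2).prod

noncomputable def eval (f : (Fin d → ℝ) → Fin dz → ℝ) (g : (Fin dz → ℝ) → ℝ)
    (T : FaaDiBrunoTerm d dz) (θ : Fin d → ℝ) : ℝ :=
  pdL T.outer g (f θ) * innerProd f T.inner θ

def derivInner (i : Fin d) :
    List (List (Fin d) × Fin dz) → Multiset (List (List (Fin d) × Fin dz))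
  | [] => 0
  | q :: Q => ((i :: q.1, q.2) :: Q) ::ₘ (derivInner i Q).map (q :: ·)

/-- `∂_i` of a term: the chain rule acting on `∂^outer g ∘ f` (first summand) plus the Leibniz
rule acting on the factors (second summand). -/
def deriv (i : Fin d) (T : FaaDiBrunoTerm d dz) : Multiset (FaaDiBrunoTerm d dz) :=
  (Finset.univ.val.map fun j => ⟨j :: T.outer, ([i], j) :: T.inner⟩) +
    (derivInner i T.inner).map fun Q => ⟨T.outer, Q⟩

def OrderLE (n : ℕ) (T : FaaDiBrunoTerm d dz) : Prop :=
  T.outer.length ≤ n ∧ T.inner.length ≤ n ∧ ∀ q ∈ T.inner, q.1.length ≤ n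

theorem card_derivInner (i : Fin d) (Q : List (List (Fin d) × Fin dz)) :
    Multiset.card (derivInner i Q) = Q.length := by
  induction Q with
  | nil => rfl
  | cons q Q ih => simp [derivInner, ih]

theorem card_deriv (i : Fin d) (T : FaaDiBrunoTerm d dz) :
    Multiset.card (T.deriv i) = dz + T.inner.length := by
  simp [deriv, card_derivInner]

theorem length_le_of_mem_derivInner {i : Fin d} {n : ℕ} {Q Q' : List (List (Fin d) × Fin dz)}
    (hQ : ∀ q ∈ Q, q.1.length ≤ n) (hQ' : Q' ∈ derivInner i Q) :
    Q'.length = Q.length ∧ ∀ q ∈ Q', q.1.length ≤ n + 1 := by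
  induction Q generalizing Q' with
  | nil => simp [derivInner] at hQ'
  | cons q Q ih =>
    simp only [derivInner, Multiset.mem_cons, Multiset.mem_map] at hQ'
    simp only [List.mem_cons, forall_eq_or_imp] at hQ
    rcases hQ' with rfl | ⟨Q', hQ', rfl⟩
    · refine ⟨rfl, ?_⟩
      simp only [List.mem_cons, forall_eq_or_imp, List.length_cons]
      exact ⟨by omega, fun q hq => (hQ.2 q hq).trans n.le_succ⟩
    · obtain ⟨hlen, hQ'⟩ := ih hQ.2 hQ'
      simp only [List.length_cons, hlen, List.mem_cons, forall_eq_or_imp, true_and]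
      exact ⟨hQ.1.trans n.le_succ, hQ'⟩

theorem OrderLE.of_mem_deriv {n : ℕ} {T T' : FaaDiBrunoTerm d dz} (hT : T.OrderLE n) {i : Fin d}
    (hT' : T' ∈ T.deriv i) : T'.OrderLE (n + 1) := by
  obtain ⟨houter, hlen, hinner⟩ := hT
  simp only [deriv, Multiset.mem_add, Multiset.mem_map, Finset.mem_val, Finset.mem_univ,
    true_and] at hT'
  rcases hT' with ⟨j, rfl⟩ | ⟨Q, hQ, rfl⟩
  · refine ⟨by simpa using houter, by simpa using hlen, ?_⟩
    simp only [List.mem_cons, forall_eq_or_imp, List.length_cons, List.length_nil]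
    exact ⟨by omega, fun q hq => (hinner q hq).trans n.le_succ⟩
  · obtain ⟨hQlen, hQ⟩ := length_le_of_mem_derivInner hinner hQ
    exact ⟨houter.trans n.le_succ, by simp only [hQlen]; omega, hQ⟩

variable {f : (Fin d → ℝ) → Fin dz → ℝ} {g : (Fin dz → ℝ) → ℝ} {θ : Fin d → ℝ}

theorem innerProd_nil : innerProd f ([] : List (List (Fin d) × Fin dz)) = fun _ => 1 := rfl

theorem innerProd_cons (q : List (Fin d) × Fin dz) (Q : List (List (Fin d) × Fin dz)) :
    innerProd f (q :: Q) = fun t => pdL q.1 f t q.2 * innerProd f Q t := by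
  ext t
  simp [innerProd]

theorem differentiableAt_innerProd {Q : List (List (Fin d) × Fin dz)}
    (hQ : ∀ q ∈ Q, DifferentiableAt ℝ (pdL q.1 f) θ) :
    DifferentiableAt ℝ (innerProd f Q) θ := by
  induction Q with
  | nil => simp [innerProd_nil]
  | cons q Q ih =>
    simp only [List.mem_cons, forall_eq_or_imp] at hQ
    rw [innerProd_cons]
    exact (differentiableAt_pi.1 hQ.1 q.2).mul (ih hQ.2)

theorem pd_innerProd {Q : List (List (Fin d) × Fin dz)}
    (hQ : ∀ q ∈ Q, DifferentiableAt ℝ (pdL q.1 f) θ) (i : Fin d) :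
    pd i (innerProd f Q) θ = ((derivInner i Q).map fun Q' => innerProd f Q' θ).sum := by
  induction Q with
  | nil => simp [innerProd_nil, pd, derivInner]
  | cons q Q ih =>
    simp only [List.mem_cons, forall_eq_or_imp] at hQ
    rw [innerProd_cons, pd_mul (differentiableAt_pi.1 hQ.1 q.2)
      (differentiableAt_innerProd hQ.2), pd_apply hQ.1, ih hQ.2]
    simp only [derivInner, Multiset.map_cons, Multiset.sum_cons, Multiset.map_map]
    congr 1
    rw [← Multiset.sum_map_mul_left]
    rfl

theorem differentiableAt_eval {T : FaaDiBrunoTerm d dz} (hf : DifferentiableAt ℝ f θ)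
    (hg : DifferentiableAt ℝ (pdL T.outer g) (f θ))
    (hQ : ∀ q ∈ T.inner, DifferentiableAt ℝ (pdL q.1 f) θ) :
    DifferentiableAt ℝ (T.eval f g) θ :=
  (hg.comp θ hf).mul (differentiableAt_innerProd hQ)

theorem pd_eval {T : FaaDiBrunoTerm d dz} (hf : DifferentiableAt ℝ f θ)
    (hg : DifferentiableAt ℝ (pdL T.outer g) (f θ))
    (hQ : ∀ q ∈ T.inner, DifferentiableAt ℝ (pdL q.1 f) θ) (i : Fin d) :
    pd i (T.eval f g) θ = ((T.deriv i).map fun T' => T'.eval f g θ).sum := by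
  have hprod := pd_mul (a := fun t => pdL T.outer g (f t)) (hg.comp θ hf)
    (differentiableAt_innerProd hQ) i
  rw [pd_comp hg hf, pd_innerProd hQ] at hprod
  rw [show T.eval f g = fun t => pdL T.outer g (f t) * innerProd f T.inner t from rfl, hprod]
  simp only [deriv, Multiset.map_add, Multiset.sum_add, Multiset.map_map]
  congr 1
  · rw [Finset.sum_mul, Finset.sum_eq_multiset_sum]
    congr 1
    refine Multiset.map_congr rfl fun j _ => ?_
    simp only [Function.comp_apply, eval, innerProd_cons, pdL, List.foldr_cons, List.foldr_nil]
    ring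
  · rw [← Multiset.sum_map_mul_left]
    rfl

theorem abs_innerProd_le {Q : List (List (Fin d) × Fin dz)} {ψ : ℝ}
    (hQ : ∀ q ∈ Q, |pdL q.1 f θ q.2| ≤ ψ) : |innerProd f Q θ| ≤ ψ ^ Q.length := by
  induction Q with
  | nil => simp [innerProd_nil]
  | cons q Q ih =>
    simp only [List.mem_cons, forall_eq_or_imp] at hQ
    rw [innerProd_cons, abs_mul, List.length_cons, pow_succ']
    exact mul_le_mul hQ.1 (ih hQ.2) (abs_nonneg _) ((abs_nonneg _).trans hQ.1)

theorem abs_eval_le {T : FaaDiBrunoTerm d dz} {n : ℕ} {K ψ : ℝ} (hK : 1 ≤ K) (hψ : 1 ≤ ψ)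
    (hf₀ : ‖f θ‖ ≤ ψ) (hf : ∀ L : List (Fin d), L ≠ [] → L.length ≤ p → ‖pdL L f θ‖ ≤ ψ)
    (hg : ∀ Lz : List (Fin dz), Lz ≠ [] → Lz.length ≤ p →
      |pdL Lz g (f θ)| ≤ K * |g (f θ)| * (1 + ‖f θ‖) ^ Lz.length)
    (hT : T.OrderLE n) (hn : n ≤ p) :
    |T.eval f g θ| ≤ K * |g (f θ)| * (2 * ψ) ^ n * ψ ^ n := by
  obtain ⟨houter, hlen, hinner⟩ := hT
  have hfactor : ∀ q ∈ T.inner, |pdL q.1 f θ q.2| ≤ ψ := fun q hq =>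
    (norm_le_pi_norm (pdL q.1 f θ) q.2).trans
      (norm_pdL_le_of_forall_ne_nil hf₀ hf ((hinner q hq).trans hn))
  calc |T.eval f g θ|
      = |pdL T.outer g (f θ)| * |innerProd f T.inner θ| := abs_mul _ _
    _ ≤ (K * |g (f θ)| * (1 + ‖f θ‖) ^ T.outer.length) * ψ ^ T.inner.length :=
        mul_le_mul (abs_pdL_le_of_forall_ne_nil hK hg (houter.trans hn))
          (abs_innerProd_le hfactor) (abs_nonneg _) (by positivity)
    _ ≤ (K * |g (f θ)| * (2 * ψ) ^ n) * ψ ^ n := by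
        gcongr
        calc (1 + ‖f θ‖) ^ T.outer.length ≤ (2 * ψ) ^ T.outer.length := by
              gcongr; linarith
          _ ≤ (2 * ψ) ^ n := pow_le_pow_right₀ (by linarith) houter

end FaaDiBrunoTerm

section Expansion

variable {d dz p : ℕ} {Θ : Set (Fin d → ℝ)} {Z : Set (Fin dz → ℝ)}
  {f : (Fin d → ℝ) → Fin dz → ℝ} {g : (Fin dz → ℝ) → ℝ}

theorem pd_sum_eval (hΘ : IsOpen Θ) (hZ : IsOpen Z) (hf : ContDiffOn ℝ p f Θ)
    (hg : ContDiffOn ℝ p g Z) {θ : Fin d → ℝ} (hθ : θ ∈ Θ) (hfθ : f θ ∈ Z)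
    {n : ℕ} (hn : n < p) {Ts : Multiset (FaaDiBrunoTerm d dz)} (hTs : ∀ T ∈ Ts, T.OrderLE n)
    (i : Fin d) :
    pd i (fun t => (Ts.map fun T => T.eval f g t).sum) θ =
      ((Ts.bind (·.deriv i)).map fun T => T.eval f g θ).sum := by
  have hf' : DifferentiableAt ℝ f θ :=
    differentiableAt_pdL hΘ hf (L := []) (by simp; omega) hθ
  have hg' : ∀ T ∈ Ts, DifferentiableAt ℝ (pdL T.outer g) (f θ) := fun T hT =>
    differentiableAt_pdL hZ hg ((hTs T hT).1.trans_lt hn) hfθ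
  have hQ : ∀ T ∈ Ts, ∀ q ∈ T.inner, DifferentiableAt ℝ (pdL q.1 f) θ := fun T hT q hq =>
    differentiableAt_pdL hΘ hf (((hTs T hT).2.2 q hq).trans_lt hn) hθ
  rw [pd_multiset_sum Ts
      (fun T hT => FaaDiBrunoTerm.differentiableAt_eval hf' (hg' T hT) (hQ T hT)),
    Multiset.map_bind, Multiset.sum_bind]
  exact congrArg Multiset.sum <| Multiset.map_congr rfl fun T hT =>
    FaaDiBrunoTerm.pd_eval hf' (hg' T hT) (hQ T hT) i

theorem exists_pdL_comp_eq_sum (hΘ : IsOpen Θ) (hZ : IsOpen Z) (hf : ContDiffOn ℝ p f Θ)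
    (hg : ContDiffOn ℝ p g Z) (hfZ : ∀ θ ∈ Θ, f θ ∈ Z) (Ld : List (Fin d))
    (hLd : Ld.length ≤ p) :
    ∃ Ts : Multiset (FaaDiBrunoTerm d dz),
      Multiset.card Ts ≤ (dz + Ld.length) ^ Ld.length ∧ (∀ T ∈ Ts, T.OrderLE Ld.length) ∧
      Set.EqOn (pdL Ld fun t => g (f t)) (fun θ => (Ts.map fun T => T.eval f g θ).sum) Θ := by
  induction Ld with
  | nil =>
    refine ⟨{⟨[], []⟩}, by simp, by simp [FaaDiBrunoTerm.OrderLE], fun θ _ => ?_⟩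
    simp [FaaDiBrunoTerm.eval, FaaDiBrunoTerm.innerProd_nil, pdL]
  | cons i Ld ih =>
    rw [List.length_cons] at hLd ⊢
    obtain ⟨Ts, hcard, horder, hrepr⟩ := ih (by omega)
    refine ⟨Ts.bind (·.deriv i), ?_, fun T' hT' => ?_, fun θ hθ => ?_⟩
    · have hstep : ∀ k ∈ Ts.map (Multiset.card ∘ (·.deriv i)), k ≤ dz + Ld.length := by
        simp only [Multiset.mem_map, Function.comp_apply, FaaDiBrunoTerm.card_deriv]
        rintro _ ⟨T, hT, rfl⟩
        exact Nat.add_le_add_left (horder T hT).2.1 dz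
      calc Multiset.card (Ts.bind (·.deriv i))
          ≤ Multiset.card Ts * (dz + Ld.length) := by
            simpa [Multiset.card_bind] using Multiset.sum_le_card_nsmul _ _ hstep
        _ ≤ (dz + Ld.length) ^ Ld.length * (dz + Ld.length) := by gcongr
        _ ≤ (dz + (Ld.length + 1)) ^ (Ld.length + 1) := by
            rw [← pow_succ]; gcongr; omega
    · obtain ⟨T, hT, hT'⟩ := Multiset.mem_bind.1 hT'
      exact (horder T hT).of_mem_deriv hT'
    · calc pd i (pdL Ld fun t => g (f t)) θ
          = pd i (fun t => (Ts.map fun T => T.eval f g t).sum) θ :=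
            pd_congr_of_eqOn hΘ hrepr i hθ
        _ = _ := pd_sum_eval hΘ hZ hf hg hθ (hfZ θ hθ) (by omega) horder i

end Expansion

theorem stmt11_general (d dz p : ℕ) (K : ℝ) (hK : 1 ≤ K) :
    ∃ L : ℝ, 1 ≤ L ∧
      ∀ (Θ : Set (Fin d → ℝ)) (Z : Set (Fin dz → ℝ)), IsOpen Θ → IsOpen Z →
      ∀ (f : (Fin d → ℝ) → (Fin dz → ℝ)) (g : (Fin dz → ℝ) → ℝ)
        (φ : (Fin d → ℝ) → ℝ),
        ContDiffOn ℝ p f Θ → ContDiffOn ℝ p g Z →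
        (∀ θ ∈ Θ, f θ ∈ Z) →
        (∀ θ ∈ Θ, 1 ≤ φ θ) →
        (∀ θ ∈ Θ, ‖f θ‖ ≤ φ θ) →
        (∀ θ ∈ Θ, ∀ Ld : List (Fin d), Ld ≠ [] → Ld.length ≤ p →
          ‖pdL Ld f θ‖ ≤ φ θ) →
        (∀ z ∈ Z, ∀ Lz : List (Fin dz), Lz ≠ [] → Lz.length ≤ p →
          |pdL Lz g z| ≤ K * |g z| * (1 + ‖z‖) ^ Lz.length) →
        ∀ θ ∈ Θ, ∀ Ld : List (Fin d), Ld ≠ [] → Ld.length ≤ p →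
          |pdL Ld (fun t => g (f t)) θ| ≤ L * |g (f θ)| * φ θ ^ (2 * Ld.length) := by
  have hC : (1 : ℝ) ≤ 2 * (dz + p) + 1 := by linarith [(by positivity : (0 : ℝ) ≤ dz + p)]
  refine ⟨K * (2 * (dz + p) + 1) ^ p, one_le_mul_of_one_le_of_one_le hK (one_le_pow₀ hC), ?_⟩
  intro Θ Z hΘ hZ f g φ hf hg hfZ hφ hf₀ hdf hdg θ hθ Ld _ hLd
  obtain ⟨Ts, hcard, horder, hrepr⟩ := exists_pdL_comp_eq_sum hΘ hZ hf hg hfZ Ld hLd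
  set n := Ld.length
  have hψ : 1 ≤ φ θ := hφ θ hθ
  have hterm : ∀ T ∈ Ts, |T.eval f g θ| ≤ K * |g (f θ)| * (2 * φ θ) ^ n * φ θ ^ n :=
    fun T hT => FaaDiBrunoTerm.abs_eval_le hK hψ (hf₀ θ hθ) (hdf θ hθ) (hdg (f θ) (hfZ θ hθ))
      (horder T hT) hLd
  have hcard' : (Multiset.card Ts : ℝ) ≤ (dz + n) ^ n := by exact_mod_cast hcard
  have hC' : 2 * ((dz : ℝ) + n) ≤ 2 * (dz + p) + 1 := by
    linarith [(by exact_mod_cast hLd : (n : ℝ) ≤ p)]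
  rw [hrepr hθ]
  calc |(Ts.map fun T => T.eval f g θ).sum|
      ≤ Multiset.card Ts * (K * |g (f θ)| * (2 * φ θ) ^ n * φ θ ^ n) :=
        abs_multiset_sum_map_le Ts _ hterm
    _ ≤ (dz + n) ^ n * (K * |g (f θ)| * (2 * φ θ) ^ n * φ θ ^ n) := by
        gcongr
    _ = K * (2 * (dz + n)) ^ n * |g (f θ)| * φ θ ^ (2 * n) := by
        simp only [mul_pow]; ring
    _ ≤ K * (2 * (dz + p) + 1) ^ p * |g (f θ)| * φ θ ^ (2 * n) := by
        gcongr ?_ * _ * _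
        calc K * (2 * ((dz : ℝ) + n)) ^ n ≤ K * (2 * (dz + p) + 1) ^ n := by gcongr
          _ ≤ K * (2 * (dz + p) + 1) ^ p := by gcongr

/-- Appendix Lemma A.1, bound part: there is `L ∈ [1,∞)`
(depending only on `d, d_z, p, K`) with
`|∂^α (g ∘ f)(θ)| ≤ L |g(f(θ))| φ(θ)^{2|α|}` for `0 ≠ α`, `|α| ≤ p`. -/
theorem stmt11 (d dz p : ℕ) (hp : 1 ≤ p) (K : ℝ) (hK : 1 ≤ K) :
    ∃ L : ℝ, 1 ≤ L ∧
      ∀ (Θ : Set (Fin d → ℝ)) (Z : Set (Fin dz → ℝ)), IsOpen Θ → IsOpen Z →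
      ∀ (f : (Fin d → ℝ) → (Fin dz → ℝ)) (g : (Fin dz → ℝ) → ℝ)
        (φ : (Fin d → ℝ) → ℝ),
        ContDiffOn ℝ p f Θ → ContDiffOn ℝ p g Z →
        (∀ θ ∈ Θ, f θ ∈ Z) →
        (∀ θ ∈ Θ, 1 ≤ φ θ) →
        (∀ θ ∈ Θ, ‖f θ‖ ≤ φ θ) →
        (∀ θ ∈ Θ, ∀ Ld : List (Fin d), Ld ≠ [] → Ld.length ≤ p →
          ‖pdL Ld f θ‖ ≤ φ θ) →
        (∀ z ∈ Z, ∀ Lz : List (Fin dz), Lz ≠ [] → Lz.length ≤ p →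
          |pdL Lz g z| ≤ K * |g z| * (1 + ‖z‖) ^ Lz.length) →
        ∀ θ ∈ Θ, ∀ Ld : List (Fin d), Ld ≠ [] → Ld.length ≤ p →
          |pdL Ld (fun t => g (f t)) θ| ≤ L * |g (f θ)| * φ θ ^ (2 * Ld.length) :=
  stmt11_general d dz p K hK
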